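/- arXiv:1103.6089 — 2 statements merged into one kernel-verified Lean document; each statement's English description precedes it below -/
import Mathlib

section
/- For d ∈ {2,3}, suppose u ∈ L²(ℝ^d) satisfies ⟨û, (|ξ|² + i) f̂⟩ = 0 for all f̂ ∈ (1+|ξ|²)^{−1}L²(ℝ^d) with ∫_{ℝ^d} f̂(ξ) dξ = 0. Then there exists a constant c ∈ ℂ with (|ξ|² − i) û(ξ) = c almost everywhere, i.e. û(ξ) = c/(|ξ|² − i). -/
/-!
With `v ξ = (|ξ|² - i) w ξ`, which is locally integrable since `w ∈ L²`, the hypothesis tested on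
real test functions `g` with `∫ g = 0` says `∫ g v = 0`. Fixing a bump `ψ` with `∫ ψ = 1`, every
test function `g` differs from `(∫ g) ψ` by one of mean zero, so `v` and the constant `∫ ψ v` have
the same integral against all test functions and hence agree a.e.
-/

open MeasureTheory Complex
open scoped ContDiff

section MeanZeroTest

variable {E F : Type*} [NormedAddCommGroup E] [NormedSpace ℝ E] [FiniteDimensional ℝ E]
  [MeasurableSpace E] [BorelSpace E] {μ : Measure E} [IsLocallyFiniteMeasure μ]
  [μ.IsOpenPosMeasure] [NormedAddCommGroup F] [NormedSpace ℝ F] [CompleteSpace F]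

theorem exists_ae_eq_const_of_integral_contDiff_smul_eq_zero {f : E → F}
    (hf : LocallyIntegrable f μ)
    (h : ∀ g : E → ℝ, ContDiff ℝ ∞ g → HasCompactSupport g → ∫ x, g x ∂μ = 0 →
      ∫ x, g x • f x ∂μ = 0) :
    ∃ c : F, ∀ᵐ x ∂μ, f x = c := by
  let ψ : E → ℝ := (⟨1, 2, one_pos, one_lt_two⟩ : ContDiffBump (0 : E)).normed μ
  have hψ : ContDiff ℝ ∞ ψ := ContDiffBump.contDiff_normed _
  have hψs : HasCompactSupport ψ := ContDiffBump.hasCompactSupport_normed _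
  have hψ1 : ∫ x, ψ x ∂μ = 1 := ContDiffBump.integral_normed _
  refine ⟨∫ x, ψ x • f x ∂μ, ae_eq_of_integral_contDiff_smul_eq hf (locallyIntegrable_const _)
    fun g hg hgs => ?_⟩
  set a := ∫ x, g x ∂μ
  have hgψ : ∫ x, (g x - a * ψ x) ∂μ = 0 := by
    rw [integral_sub (hg.continuous.integrable_of_hasCompactSupport hgs)
      ((hψ.continuous.integrable_of_hasCompactSupport hψs).const_mul a),
      integral_const_mul, hψ1, mul_one, sub_self]
  have hvanish := h _ (hg.sub (contDiff_const.mul hψ)) (hgs.sub (hψs.mul_left)) hgψ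
  have hgf : Integrable (fun x => g x • f x) μ :=
    hf.integrable_smul_left_of_hasCompactSupport hg.continuous hgs
  have hψf : Integrable (fun x => a • ψ x • f x) μ :=
    (hf.integrable_smul_left_of_hasCompactSupport hψ.continuous hψs).smul a
  simp only [sub_smul, mul_smul] at hvanish
  rw [integral_sub hgf hψf, integral_smul, sub_eq_zero] at hvanish
  rw [hvanish, integral_smul_const]

end MeanZeroTest

theorem stmt9_general (d : ℕ) (w : EuclideanSpace ℝ (Fin d) → ℂ)
    (hw : MemLp w 2 (volume : Measure (EuclideanSpace ℝ (Fin d))))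
    (horth : ∀ g : EuclideanSpace ℝ (Fin d) → ℂ,
      MemLp (fun ξ => (1 + (‖ξ‖^2 : ℂ)) * g ξ) 2 (volume : Measure (EuclideanSpace ℝ (Fin d))) →
      Integrable g (volume : Measure (EuclideanSpace ℝ (Fin d))) →
      (∫ ξ, g ξ) = 0 →
      ∫ ξ, w ξ * starRingEnd ℂ (((‖ξ‖^2 : ℂ) + Complex.I) * g ξ) = 0) :
    ∃ c : ℂ, ∀ᵐ ξ ∂(volume : Measure (EuclideanSpace ℝ (Fin d))),
      ((‖ξ‖^2 : ℂ) - Complex.I) * w ξ = c := by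
  refine exists_ae_eq_const_of_integral_contDiff_smul_eq_zero
    ((hw.locallyIntegrable one_le_two).continuous_mul (by fun_prop)) fun g hg hgs hg0 => ?_
  have hgC : Continuous fun ξ => (g ξ : ℂ) := continuous_ofReal.comp hg.continuous
  have hgCs : HasCompactSupport fun ξ => (g ξ : ℂ) := hgs.comp_left ofReal_zero
  convert horth (fun ξ => (g ξ : ℂ)) ((by fun_prop : Continuous _).memLp_of_hasCompactSupport
    hgCs.mul_left) (hgC.integrable_of_hasCompactSupport hgCs) (by rw [integral_complex_ofReal, hg0, ofReal_zero])
    using 3 with ξ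
  simp only [map_mul, map_add, map_pow, conj_ofReal, conj_I, real_smul]
  ring

/-- for d ∈ {2,3}, if w = û ∈ L²(ℝ^d) is orthogonal (in Fourier space) to
(|ξ|² + i)f̂ for all f̂ ∈ (1+|ξ|²)⁻¹L²(ℝ^d) with ∫ f̂ = 0, then (|ξ|² − i)w is a.e. equal
to a constant c, i.e. w(ξ) = c/(|ξ|² − i). -/
theorem stmt9 (d : ℕ) (hd : d = 2 ∨ d = 3) (w : EuclideanSpace ℝ (Fin d) → ℂ)
    (hw : MemLp w 2 (volume : Measure (EuclideanSpace ℝ (Fin d))))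
    (horth : ∀ g : EuclideanSpace ℝ (Fin d) → ℂ,
      MemLp (fun ξ => (1 + (‖ξ‖^2 : ℂ)) * g ξ) 2 (volume : Measure (EuclideanSpace ℝ (Fin d))) →
      Integrable g (volume : Measure (EuclideanSpace ℝ (Fin d))) →
      (∫ ξ, g ξ) = 0 →
      ∫ ξ, w ξ * starRingEnd ℂ (((‖ξ‖^2 : ℂ) + Complex.I) * g ξ) = 0) :
    ∃ c : ℂ, ∀ᵐ ξ ∂(volume : Measure (EuclideanSpace ℝ (Fin d))),
      ((‖ξ‖^2 : ℂ) - Complex.I) * w ξ = c :=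
  stmt9_general d w hw horth
end

section
/- The self-adjoint operator L^μ on L²(ℝ³) (μ < 0) has no eigenvalue λ ≥ 0: if φ ∈ D(L*) satisfies ⟨φ, (L̄ − λ)ψ⟩ = 0 for all ψ ∈ D(L̄) and λ ≥ 0, and φ ∈ L²(ℝ³), then φ = 0. Equivalently, the Fourier-space equation (|ξ|² − λ)φ̂ = c has no nonzero L² solution for λ ≥ 0 (for any constant c). -/
open MeasureTheory Metric Filter Topology Module

/-! If `c ≠ 0`, then on the shell `√λ < ‖ξ‖ < √λ + t` the equation forces
`‖w ξ‖ ≥ ‖c‖ / δ` with `δ = (√λ + t)² - λ`, while in dimension 3 the shell has volume at least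
a multiple of `δ² / t`. Chebyshev's inequality then bounds `‖w‖₂²` below by a multiple of
`‖c‖² / t`, which is unbounded as `t → 0`. Hence `c = 0`, and `w` vanishes off the null sphere
`‖ξ‖ = √λ`. -/

theorem MeasureTheory.sq_mul_measureReal_le_eLpNorm_sq {α F : Type*} [MeasurableSpace α]
    {μ : Measure α} [NormedAddCommGroup F] {f : α → F} (hf : MemLp f 2 μ) {s : Set α} {a : ℝ}
    (ha : 0 ≤ a) (h : ∀ᵐ x ∂μ, x ∈ s → a ≤ ‖f x‖) :
    a ^ 2 * μ.real s ≤ (eLpNorm f 2 μ).toReal ^ 2 := by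
  have hs : μ s ≤ μ {x | ENNReal.ofReal a ≤ ‖f x‖ₑ} := by
    refine measure_mono_ae ?_
    filter_upwards [h] with x hx hxs
    show ENNReal.ofReal a ≤ ‖f x‖ₑ
    rw [← ofReal_norm]
    exact ENNReal.ofReal_le_ofReal (hx hxs)
  have hcheb := (mul_le_mul_right hs _).trans
    (mul_meas_ge_le_pow_eLpNorm' μ two_ne_zero ENNReal.ofNat_ne_top hf.1 (ENNReal.ofReal a))
  simpa [ENNReal.toReal_mul, ENNReal.toReal_ofReal ha, Measure.real] using
    ENNReal.toReal_mono (ENNReal.rpow_ne_top_of_nonneg (by norm_num) hf.eLpNorm_ne_top) hcheb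

-- The difference of the two sides is `t ^ 4`.
theorem three_mul_sq_sub_sq_le (r t : ℝ) :
    3 * ((r + t) ^ 2 - r ^ 2) ^ 2 ≤ 4 * t * ((r + t) ^ 3 - r ^ 3) := by
  nlinarith [pow_two_nonneg (t ^ 2)]

theorem Complex.norm_le_of_sub_mul_eq {x lam s : ℝ} {z c : ℂ} (h₁ : lam ≤ x) (h₂ : x ≤ s)
    (h : ((x : ℂ) - lam) * z = c) : ‖c‖ ≤ (s - lam) * ‖z‖ := by
  rw [← h, norm_mul, ← Complex.ofReal_sub, Complex.norm_real, Real.norm_of_nonneg (by linarith)]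
  gcongr

section
variable {E : Type*} [NormedAddCommGroup E] [NormedSpace ℝ E] [FiniteDimensional ℝ E]
  [MeasurableSpace E] [BorelSpace E] (μ : Measure E) [μ.IsAddHaarMeasure]

theorem MeasureTheory.Measure.addHaar_ball_diff_closedBall [Nontrivial E] (x : E) {r R : ℝ}
    (hr : 0 ≤ r) (hrR : r < R) :
    μ (ball x R \ closedBall x r) =
      ENNReal.ofReal (R ^ finrank ℝ E - r ^ finrank ℝ E) * μ (ball 0 1) := by
  rw [measure_sdiff (closedBall_subset_ball hrR) measurableSet_closedBall.nullMeasurableSet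
    measure_closedBall_lt_top.ne, Measure.addHaar_ball μ x (hr.trans hrR.le),
    Measure.addHaar_closedBall μ x hr, ENNReal.ofReal_sub _ (by positivity),
    ENNReal.sub_mul fun _ _ => measure_ball_lt_top.ne]

theorem three_mul_sq_norm_mul_measureReal_ball_le (hE : finrank ℝ E = 3) {lam : ℝ}
    (hlam : 0 ≤ lam) {c : ℂ} {w : E → ℂ} (hw : MemLp w 2 μ)
    (heq : ∀ᵐ ξ ∂μ, ((‖ξ‖ ^ 2 : ℂ) - lam) * w ξ = c) {t : ℝ} (ht : 0 < t) :
    3 * ‖c‖ ^ 2 * μ.real (ball 0 1) ≤ 4 * t * (eLpNorm w 2 μ).toReal ^ 2 := by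
  have : Nontrivial E := Module.nontrivial_of_finrank_eq_succ hE
  set r := √lam
  have hr : 0 ≤ r := Real.sqrt_nonneg lam
  have hr2 : r ^ 2 = lam := Real.sq_sqrt hlam
  set δ := (r + t) ^ 2 - r ^ 2
  have hδ : 0 < δ := by nlinarith
  set S := ball (0 : E) (r + t) \ closedBall 0 r
  have hbound : ∀ᵐ ξ ∂μ, ξ ∈ S → ‖c‖ / δ ≤ ‖w ξ‖ := by
    filter_upwards [heq] with ξ hξ hS
    simp only [S, Set.mem_sdiff, mem_ball_zero_iff, mem_closedBall_zero_iff, not_le] at hS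
    rw [div_le_iff₀' hδ]
    have := Complex.norm_le_of_sub_mul_eq (x := ‖ξ‖ ^ 2) (s := (r + t) ^ 2)
      (hr2 ▸ pow_le_pow_left₀ hr hS.2.le 2) (pow_le_pow_left₀ (norm_nonneg ξ) hS.1.le 2)
      (by push_cast; exact hξ)
    simpa only [δ, hr2] using this
  have hS : μ.real S = ((r + t) ^ 3 - r ^ 3) * μ.real (ball 0 1) := by
    rw [Measure.real, Measure.addHaar_ball_diff_closedBall μ 0 hr (by linarith), hE,
      ENNReal.toReal_mul, ENNReal.toReal_ofReal (sub_nonneg.2 (by gcongr; linarith)), Measure.real]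
  calc 3 * ‖c‖ ^ 2 * μ.real (ball 0 1)
      = 3 * δ ^ 2 * ((‖c‖ / δ) ^ 2 * μ.real (ball 0 1)) := by field_simp
    _ ≤ 4 * t * ((r + t) ^ 3 - r ^ 3) * ((‖c‖ / δ) ^ 2 * μ.real (ball 0 1)) :=
      mul_le_mul_of_nonneg_right (three_mul_sq_sub_sq_le r t) (by positivity)
    _ = 4 * t * ((‖c‖ / δ) ^ 2 * μ.real S) := by rw [hS]; ring
    _ ≤ 4 * t * (eLpNorm w 2 μ).toReal ^ 2 := by
      gcongr
      exact sq_mul_measureReal_le_eLpNorm_sq hw (by positivity) hbound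

theorem eq_zero_of_memLp_of_ae_sub_mul_eq (hE : finrank ℝ E = 3) {lam : ℝ}
    (hlam : 0 ≤ lam) {c : ℂ} {w : E → ℂ} (hw : MemLp w 2 μ)
    (heq : ∀ᵐ ξ ∂μ, ((‖ξ‖ ^ 2 : ℂ) - lam) * w ξ = c) : c = 0 := by
  have hlim : Tendsto (fun t : ℝ ↦ 4 * t * (eLpNorm w 2 μ).toReal ^ 2) (𝓝[>] 0) (𝓝 0) :=
    tendsto_nhdsWithin_of_tendsto_nhds <| by
      simpa using (Continuous.tendsto (by fun_prop) 0 :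
        Tendsto (fun t : ℝ ↦ 4 * t * (eLpNorm w 2 μ).toReal ^ 2) _ _)
  have hle := ge_of_tendsto hlim (eventually_nhdsWithin_of_forall fun t ht ↦
    three_mul_sq_norm_mul_measureReal_ball_le μ hE hlam hw heq ht)
  have hV : 0 < μ.real (ball 0 1) :=
    ENNReal.toReal_pos (measure_ball_pos μ 0 one_pos).ne' measure_ball_lt_top.ne
  have : ‖c‖ ^ 2 ≤ 0 := by nlinarith
  simpa using this

theorem ae_eq_zero_of_ae_sub_mul_eq_zero [Nontrivial E] {lam : ℝ} {w : E → ℂ}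
    (heq : ∀ᵐ ξ ∂μ, ((‖ξ‖ ^ 2 : ℂ) - lam) * w ξ = 0) : w =ᵐ[μ] 0 := by
  filter_upwards [heq, measure_eq_zero_iff_ae_notMem.mp (Measure.addHaar_sphere μ 0 √lam)]
    with ξ hξ hsphere
  refine (mul_eq_zero.mp hξ).resolve_left fun h ↦ hsphere ?_
  rw [mem_sphere_zero_iff_norm, ← Real.sqrt_sq (norm_nonneg ξ)]
  exact congrArg Real.sqrt (by exact_mod_cast sub_eq_zero.mp h)

end

/-- no self-adjoint extension L^μ has a nonnegative eigenvalue: for λ ≥ 0, the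
Fourier-space equation (|ξ|² − λ)ŵ = c (c any constant) has no nonzero L²(ℝ³) solution. -/
theorem stmt17 (lam : ℝ) (hlam : 0 ≤ lam) (c : ℂ) (w : EuclideanSpace ℝ (Fin 3) → ℂ)
    (hw : MemLp w 2 (volume : Measure (EuclideanSpace ℝ (Fin 3))))
    (heq : ∀ᵐ ξ ∂(volume : Measure (EuclideanSpace ℝ (Fin 3))),
      ((‖ξ‖^2 : ℂ) - (lam : ℂ)) * w ξ = c) :
    w =ᵐ[volume] 0 := by
  obtain rfl := eq_zero_of_memLp_of_ae_sub_mul_eq volume finrank_euclideanSpace_fin hlam hw heq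
  exact ae_eq_zero_of_ae_sub_mul_eq_zero volume heq
end
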